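/- Let G be a finite tree with boundary δG containing x, and let λ>0. A function f:V→ℝ is a λ-flow to x satisfying f(y)−f(z)>0 for every edge (y,z) with d(x,y)>d(x,z) if and only if f is a λ-flow to x with f(z)>0 for every z∈δG∖{x}. -/

import Mathlib

open Finset

attribute [local instance] Classical.propDecidable

namespace Steklov

variable {V : Type} [Fintype V] [DecidableEq V]

/-- The boundary of a graph: the set of vertices of degree one. -/
noncomputable def bdry (G : SimpleGraph V) : Finset V :=
  Finset.univ.filter (fun v => G.degree v = 1)

/-- The graph Laplacian `Δf(x) = Σ_{y∼x} (f x - f y)`. -/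
noncomputable def lap (G : SimpleGraph V) (f : V → ℝ) (x : V) : ℝ :=
  ∑ y ∈ G.neighborFinset x, (f x - f y)

/-- `f` is a Steklov eigenfunction of `G` with eigenvalue `lam`:
`f ≠ 0`, `Δf = 0` on the interior and `∂f/∂n = lam • f` on the boundary. -/
noncomputable def IsEigenpair (G : SimpleGraph V) (lam : ℝ) (f : V → ℝ) : Prop :=
  f ≠ 0 ∧ (∀ x, x ∉ bdry G → lap G f x = 0) ∧ ∀ x ∈ bdry G, lap G f x = lam * f x

/-- The first nonzero Steklov eigenvalue of `G`. -/
noncomputable def lambda2 (G : SimpleGraph V) : ℝ :=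
  sInf {lam : ℝ | 0 < lam ∧ ∃ f : V → ℝ, IsEigenpair G lam f}

/-- `f` is a `lam`-flow to `x` on `G`. -/
noncomputable def IsFlow (G : SimpleGraph V) (lam : ℝ) (x : V) (f : V → ℝ) : Prop :=
  f ≠ 0 ∧ (∀ w, w ∉ bdry G → w ≠ x → lap G f w = 0) ∧
    ∀ w ∈ bdry G, w ≠ x → lap G f w = lam * f w

/-- The Rayleigh quotient of `f` (sum over undirected edges in the numerator). -/
noncomputable def rayleigh (G : SimpleGraph V) (f : V → ℝ) : ℝ :=
  ((∑ x, ∑ y ∈ G.neighborFinset x, (f x - f y) ^ 2) / 2) / ∑ x ∈ bdry G, f x ^ 2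

/-- `Σ(G,x)`: the set of `lam ≥ 0` admitting a `lam`-flow `f` to `x` with `f x = 0`
which increases along edges pointing away from `x`. -/
def SigmaSet (G : SimpleGraph V) (x : V) : Set ℝ :=
  {lam | 0 ≤ lam ∧ ∃ f : V → ℝ, IsFlow G lam x f ∧ f x = 0 ∧
    ∀ y z : V, G.Adj y z → G.dist x z < G.dist x y → f z < f y}

/-- `Σ̂(G,x)`: the set of `lam ≥ 0` admitting a `lam`-flow `f` to `x` with `f x = 0`. -/
def SigmaHatSet (G : SimpleGraph V) (x : V) : Set ℝ :=
  {lam | 0 ≤ lam ∧ ∃ f : V → ℝ, IsFlow G lam x f ∧ f x = 0}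

/-- `σ(G,x) = inf Σ(G,x)`. -/
noncomputable def sigma (G : SimpleGraph V) (x : V) : ℝ := sInf (SigmaSet G x)

/-- `σ̂(G,x) = inf Σ̂(G,x)`. -/
noncomputable def sigmaHat (G : SimpleGraph V) (x : V) : ℝ := sInf (SigmaHatSet G x)

/-- The vertex set of the branch from `(u,v)`: the connected component of `u`
after deleting the edge between `u` and `v`. -/
def branchSet (G : SimpleGraph V) (u v : V) : Set V :=
  {w | (G.deleteEdges {s(u, v)}).Reachable u w}

/-- The vertex set of the subtree `H(u,v)` spanned by the branch from `(u,v)` together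
with `v`. -/
def branchClosed (G : SimpleGraph V) (u v : V) : Set V :=
  insert v (branchSet G u v)

/-- `σ(H(u,v), v)`, computed intrinsically in the subtree `H(u,v)`. -/
noncomputable def sigmaB (G : SimpleGraph V) (u v : V) : ℝ :=
  sigma (G.induce (branchClosed G u v)) ⟨v, Set.mem_insert _ _⟩

/-- The double `(G)²_x` of `G` at `x`: two disjoint copies of `G` with the two
copies of `x` identified. -/
def doubleAt (G : SimpleGraph V) (x : V) : SimpleGraph (V ⊕ {v : V // v ≠ x}) where
  Adj a b :=
    match a, b with
    | Sum.inl u, Sum.inl w => G.Adj u w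
    | Sum.inr u, Sum.inr w => G.Adj u.1 w.1
    | Sum.inl u, Sum.inr w => u = x ∧ G.Adj x w.1
    | Sum.inr u, Sum.inl w => w = x ∧ G.Adj x u.1
  symm := by
    refine ⟨?_⟩
    rintro (u | u) (w | w) h
    · exact h.symm
    · exact h
    · exact h
    · exact h.symm
  loopless := by
    refine ⟨?_⟩
    rintro (u | u) h
    · exact G.loopless.irrefl u h
    · exact G.loopless.irrefl u.1 h

end Steklov

/-!
A leaf `w ≠ x` has a single neighbour `u`, which is closer to `x`, so the boundary condition
reads `f w - f u = λ f w`; if `f` increases away from `x` this is positive, hence `f w > 0`.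

Conversely, let `(y, z)` be an edge pointing away from `x` and let `B` be the branch on the
`y`-side of the bridge `{y, z}`. Summing `Δf` over `B`, every edge inside `B` cancels and only
the bridge survives, so the sum is `f y - f z`. Since `x ∉ B`, the sum is also `λ` times the sum
of `f` over the leaves in `B`, which is positive because `B` contains a leaf: its vertex
farthest from `x`.
-/

namespace SimpleGraph

variable {V : Type*} {G : SimpleGraph V} {x u w : V}

lemma Walk.dist_le_of_mem_support [DecidableEq V] (p : G.Walk x u) (hw : w ∈ p.support) :
    G.dist x w ≤ p.length :=
  (dist_le (p.takeUntil w hw)).trans (p.length_takeUntil_le_length hw)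

lemma Connected.exists_adj_dist_lt (hG : G.Connected) (hw : w ≠ x) :
    ∃ u, G.Adj w u ∧ G.dist x u < G.dist x w := by
  obtain ⟨p, hp⟩ := hG.exists_walk_length_eq_dist w x
  have hnil : ¬ p.Nil := p.not_nil_of_ne hw
  refine ⟨p.snd, p.adj_snd hnil, ?_⟩
  have htail := dist_le p.tail
  have hlen := p.length_tail_add_one hnil
  rw [dist_comm (u := x), dist_comm (u := x)]
  omega

lemma IsTree.degree_eq_one_of_forall_adj_dist_lt (hG : G.IsTree) [Fintype (G.neighborSet w)]
    (hw : w ≠ x) (hcloser : ∀ u, G.Adj w u → G.dist x u < G.dist x w) : G.degree w = 1 := by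
  classical
  obtain ⟨q, hq⟩ := hG.connected.exists_isPath x w
  rw [degree_eq_one_iff_existsUnique_adj]
  refine ⟨q.penultimate, (q.adj_penultimate (q.not_nil_of_ne hw.symm)).symm, fun u hu => ?_⟩
  refine hG.isAcyclic.eq_penultimate_of_adj_end hq hu (by_contra fun huq => ?_)
  -- otherwise `w` would lie on the geodesic from `x` to the closer vertex `u`
  obtain ⟨p, hp, hpl⟩ := hG.connected.exists_path_of_dist x u
  have hwp := hG.isAcyclic.mem_support_of_ne_mem_support_of_adj_of_isPath hp hq hu.symm huq
  have := p.dist_le_of_mem_support hwp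
  have := hcloser u hu
  omega

end SimpleGraph

namespace Steklov

open SimpleGraph

section Branch

variable {V : Type} {G : SimpleGraph V} {x y z w u : V}

lemma eq_of_adj_of_mem_branchSet_of_notMem (hb : G.IsBridge s(y, z))
    (hw : w ∈ branchSet G y z) (hu : u ∉ branchSet G y z) (hwu : G.Adj w u) : w = y ∧ u = z := by
  by_cases he : s(w, u) = s(y, z)
  · rcases Sym2.eq_iff.mp he with h | ⟨rfl, rfl⟩
    · exact h
    · exact absurd hw hb
  · exact absurd (Reachable.trans hw (deleteEdges_adj.mpr ⟨hwu, he⟩).reachable) hu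

lemma notMem_branchSet_of_dist_lt (hb : G.IsBridge s(y, z)) (hxz : G.Reachable x z)
    (hd : G.dist x z < G.dist x y) : x ∉ branchSet G y z := by
  classical
  obtain ⟨p, hp⟩ := hxz.exists_walk_length_eq_dist
  have hyp : s(y, z) ∉ p.edges := fun he =>
    absurd (p.dist_le_of_mem_support (p.fst_mem_support_of_mem_edges he)) (by omega)
  exact fun hx => hb (Reachable.trans hx (reachable_deleteEdges_iff_exists_walk.mpr ⟨p, hyp⟩))

end Branch

section Flow

variable {V : Type} [Fintype V] {G : SimpleGraph V} {x y z w u : V}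

lemma mem_bdry : w ∈ bdry G ↔ G.degree w = 1 := by
  simp [bdry]

lemma lap_of_degree_eq_one (f : V → ℝ) (hw : G.degree w = 1) (hwu : G.Adj w u) :
    lap G f w = f w - f u := by
  obtain ⟨a, ha⟩ := Finset.card_eq_one.mp hw
  have hua : u = a := by simpa [ha] using (G.mem_neighborFinset w u).mpr hwu
  rw [lap, ha, Finset.sum_singleton, hua]

lemma sum_lap_eq_sum_edges_out (G : SimpleGraph V) (f : V → ℝ) (S : Finset V) :
    ∑ w ∈ S, lap G f w = ∑ w ∈ S, ∑ u ∈ G.neighborFinset w with u ∉ S, (f w - f u) := by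
  have hinside : ∑ w ∈ S, ∑ u ∈ G.neighborFinset w with u ∈ S, (f w - f u) = 0 := by
    have hfilter : ∀ w, {u ∈ G.neighborFinset w | u ∈ S} = {u ∈ S | G.Adj w u} := fun w => by
      ext; simp [and_comm]
    simp only [hfilter, Finset.sum_filter]
    have hsplit : ∀ w u, (if G.Adj w u then f w - f u else 0) =
        (if G.Adj w u then f w else 0) - (if G.Adj u w then f u else 0) := fun w u => by
      rw [G.adj_comm u w]; split_ifs <;> ring
    -- each edge inside `S` is counted once in each direction, with opposite signs
    simp only [hsplit, Finset.sum_sub_distrib]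
    rw [Finset.sum_comm, sub_self]
  have hlap : ∀ w, lap G f w = ∑ u ∈ G.neighborFinset w with u ∈ S, (f w - f u) +
      ∑ u ∈ G.neighborFinset w with u ∉ S, (f w - f u) := fun w =>
    (Finset.sum_filter_add_sum_filter_not _ _ _).symm
  rw [Finset.sum_congr rfl fun w _ => hlap w, Finset.sum_add_distrib, hinside, zero_add]

lemma sum_lap_branchSet (hadj : G.Adj y z) (hb : G.IsBridge s(y, z)) (f : V → ℝ) :
    ∑ w ∈ (branchSet G y z).toFinset, lap G f w = f y - f z := by
  have hy : y ∈ branchSet G y z := Reachable.refl y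
  have hout : ∀ w ∈ (branchSet G y z).toFinset,
      ∑ u ∈ G.neighborFinset w with u ∉ (branchSet G y z).toFinset, (f w - f u) =
        if w = y then f y - f z else 0 := fun w hw => by
    rw [Set.mem_toFinset] at hw
    have hedge : {u ∈ G.neighborFinset w | u ∉ (branchSet G y z).toFinset} =
        if w = y then {z} else ∅ := by
      ext u
      simp only [Finset.mem_filter, mem_neighborFinset, Set.mem_toFinset]
      split_ifs with hwy
      · subst hwy
        simp only [Finset.mem_singleton]
        exact ⟨fun h => (eq_of_adj_of_mem_branchSet_of_notMem hb hw h.2 h.1).2,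
          fun h => by subst h; exact ⟨hadj, hb⟩⟩
      · simp only [Finset.notMem_empty, iff_false, not_and, not_not]
        exact fun hwu => by_contra fun hu =>
          hwy (eq_of_adj_of_mem_branchSet_of_notMem hb hw hu hwu).1
    rw [hedge]
    split_ifs with hwy
    · rw [Finset.sum_singleton, hwy]
    · rw [Finset.sum_empty]
  rw [sum_lap_eq_sum_edges_out, Finset.sum_congr rfl hout, Finset.sum_ite_eq',
    if_pos (Set.mem_toFinset.mpr hy)]

/-- A vertex of the branch farthest from `x` is a leaf. -/
lemma exists_mem_branchSet_mem_bdry (hG : G.IsTree) (hadj : G.Adj y z)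
    (hd : G.dist x z < G.dist x y) : ∃ w ∈ branchSet G y z, w ∈ bdry G := by
  have hb := isAcyclic_iff_forall_adj_isBridge.mp hG.isAcyclic hadj
  obtain ⟨w, hwB, hmax⟩ := (branchSet G y z).toFinset.exists_max_image (G.dist x)
    ⟨y, Set.mem_toFinset.mpr (Reachable.refl y)⟩
  rw [Set.mem_toFinset] at hwB
  have hwx : w ≠ x := fun h => notMem_branchSet_of_dist_lt hb (hG.connected x z) hd (h ▸ hwB)
  refine ⟨w, hwB, mem_bdry.mpr (hG.degree_eq_one_of_forall_adj_dist_lt hwx fun u hwu => ?_)⟩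
  by_cases hu : u ∈ branchSet G y z
  · exact (hmax u (Set.mem_toFinset.mpr hu)).lt_of_ne (hG.dist_ne_of_adj x hwu).symm
  · obtain ⟨rfl, rfl⟩ := eq_of_adj_of_mem_branchSet_of_notMem hb hwB hu hwu
    exact hd

lemma IsFlow.sum_lap_pos {lam : ℝ} {f : V → ℝ} (hf : IsFlow G lam x f) (hlam : 0 < lam)
    (hpos : ∀ w ∈ bdry G, w ≠ x → 0 < f w) {S : Finset V} (hx : x ∉ S)
    (hS : ∃ w ∈ S, w ∈ bdry G) : 0 < ∑ w ∈ S, lap G f w := by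
  obtain ⟨v, hvS, hv⟩ := hS
  have hvx : v ≠ x := fun h => hx (h ▸ hvS)
  refine Finset.sum_pos' (fun w hw => ?_) ⟨v, hvS, ?_⟩
  · have hwx : w ≠ x := fun h => hx (h ▸ hw)
    by_cases hbdry : w ∈ bdry G
    · exact (hf.2.2 w hbdry hwx).symm ▸ (mul_pos hlam (hpos w hbdry hwx)).le
    · exact (hf.2.1 w hbdry hwx).ge
  · exact (hf.2.2 v hv hvx).symm ▸ mul_pos hlam (hpos v hv hvx)

end Flow

variable {V : Type} [Fintype V] [DecidableEq V]

theorem flow_positive_iff_general (G : SimpleGraph V) (hG : G.IsTree)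
    (x : V) (lam : ℝ) (hlam : 0 < lam) (f : V → ℝ) :
    (IsFlow G lam x f ∧ ∀ y z : V, G.Adj y z → G.dist x z < G.dist x y → f z < f y) ↔
    (IsFlow G lam x f ∧ ∀ z ∈ bdry G, z ≠ x → 0 < f z) := by
  refine and_congr_right fun hf => ⟨fun hmono w hw hwx => ?_, fun hpos y z hadj hd => ?_⟩
  · obtain ⟨u, hwu, hd⟩ := hG.connected.exists_adj_dist_lt hwx
    have hflow : lap G f w = lam * f w := hf.2.2 w hw hwx
    rw [lap_of_degree_eq_one f (mem_bdry.mp hw) hwu] at hflow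
    have := hmono w u hwu hd
    exact pos_of_mul_pos_right (by linarith) hlam.le
  · have hb := isAcyclic_iff_forall_adj_isBridge.mp hG.isAcyclic hadj
    have hx := notMem_branchSet_of_dist_lt hb (hG.connected x z) hd
    obtain ⟨w, hwB, hw⟩ := exists_mem_branchSet_mem_bdry hG hadj hd
    have hlap := hf.sum_lap_pos hlam hpos (S := (branchSet G y z).toFinset) (by simpa using hx)
      ⟨w, Set.mem_toFinset.mpr hwB, hw⟩
    rw [sum_lap_branchSet hadj hb f] at hlap
    linarith

/-- For `lam > 0` and `x ∈ δG`, a function `f` is a `lam`-flow to `x`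
increasing along edges pointing away from `x` if and only if it is a `lam`-flow to `x`
which is positive on `δG ∖ {x}`. -/
theorem flow_positive_iff (G : SimpleGraph V) (hG : G.IsTree) (hcard : 2 ≤ Fintype.card V)
    (x : V) (hx : x ∈ bdry G) (lam : ℝ) (hlam : 0 < lam) (f : V → ℝ) :
    (IsFlow G lam x f ∧ ∀ y z : V, G.Adj y z → G.dist x z < G.dist x y → f z < f y) ↔
    (IsFlow G lam x f ∧ ∀ z ∈ bdry G, z ≠ x → 0 < f z) :=
  flow_positive_iff_general G hG x lam hlam f
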